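/- Let I, J be finite index sets and E ⊆ I × J the edge set of a bipartite graph such that every j ∈ J has exactly one neighbor in I. For each (i,j) ∈ E let A^(i,j) be an |S|×|S| column-stochastic matrix over a finite set S. Define the I,J-matrix A by A[y_J, x_I] = ∏_{(i,j)∈E} A^(i,j)[y_j, x_i]. Then ‖A‖ ≤ α({‖A^(i,j)‖ : (i,j) ∈ E}), where ‖·‖ denotes the column-difference total variation matrix norm and α is the recursively defined symmetric function with α_1(x)=x, α_{k+1}(x_1,…,x_{k+1}) = x_{k+1} + (1−x_{k+1})α_k(x_1,…,x_k). -/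
import Mathlib


def alpha : (k : ℕ) → (Fin k → ℝ) → ℝ
  | 0, _ => 0
  | k + 1, x => x (Fin.last k) + (1 - x (Fin.last k)) * alpha k (x ∘ Fin.castSucc)

noncomputable def matNorm {m n : Type*} [Fintype m] [Fintype n] [Nonempty n]
    (A : Matrix m n ℝ) : ℝ :=
  Finset.univ.sup' Finset.univ_nonempty
    (fun jj' : n × n => (1 / 2) * ∑ i, |A i jj'.1 - A i jj'.2|)

lemma alpha_eq (k : ℕ) (x : Fin k → ℝ) : alpha k x = 1 - ∏ i, (1 - x i) := by
  induction k with
  | zero => simp [alpha]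
  | succ k ih =>
      rw [alpha, ih, Fin.prod_univ_castSucc]
      simp only [Function.comp]
      ring

lemma sum_prod_pi {J S : Type*} [Fintype J] [DecidableEq J] [Fintype S]
    (h : J → S → ℝ) :
    ∑ yJ : J → S, ∏ j, h j (yJ j) = ∏ j, ∑ y, h j y := by
  rw [Finset.prod_univ_sum, Fintype.piFinset_univ]

lemma tv_prod_le {J S : Type*} [Fintype J] [DecidableEq J] [Fintype S]
    (f g : J → S → ℝ)
    (hf0 : ∀ j y, 0 ≤ f j y) (hg0 : ∀ j y, 0 ≤ g j y)
    (hf1 : ∀ j, ∑ y, f j y = 1) (hg1 : ∀ j, ∑ y, g j y = 1)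
    (D : J → ℝ) (hD1 : ∀ j, D j ≤ 1)
    (hD : ∀ j, (1 / 2) * ∑ y, |f j y - g j y| ≤ D j) :
    (1 / 2) * ∑ yJ : J → S, |(∏ j, f j (yJ j)) - ∏ j, g j (yJ j)| ≤
      1 - ∏ j, (1 - D j) := by
  have habs : ∀ a b : ℝ, |a - b| = a + b - 2 * min a b := by
    intro a b
    have h1 := max_add_min a b
    have h2 := max_sub_min_eq_abs a b
    have h3 := abs_sub_comm a b
    linarith
  -- rewrite the LHS sum
  have hsplit : ∑ yJ : J → S, |(∏ j, f j (yJ j)) - ∏ j, g j (yJ j)| =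
      2 - 2 * ∑ yJ : J → S, min (∏ j, f j (yJ j)) (∏ j, g j (yJ j)) := by
    have : ∀ yJ : J → S, |(∏ j, f j (yJ j)) - ∏ j, g j (yJ j)| =
        (∏ j, f j (yJ j)) + (∏ j, g j (yJ j)) -
          2 * min (∏ j, f j (yJ j)) (∏ j, g j (yJ j)) := fun yJ => habs _ _
    rw [Finset.sum_congr rfl (fun yJ _ => this yJ)]
    rw [Finset.sum_sub_distrib, Finset.sum_add_distrib, ← Finset.mul_sum,
      sum_prod_pi f, sum_prod_pi g]
    simp only [hf1, hg1]
    norm_num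
  rw [hsplit]
  have hmin : ∑ yJ : J → S, (∏ j, min (f j (yJ j)) (g j (yJ j))) ≤
      ∑ yJ : J → S, min (∏ j, f j (yJ j)) (∏ j, g j (yJ j)) := by
    apply Finset.sum_le_sum
    intro yJ _
    apply le_min
    · exact Finset.prod_le_prod (fun j _ => le_min (hf0 j _) (hg0 j _))
        (fun j _ => min_le_left _ _)
    · exact Finset.prod_le_prod (fun j _ => le_min (hf0 j _) (hg0 j _))
        (fun j _ => min_le_right _ _)
  have hminval : ∑ yJ : J → S, (∏ j, min (f j (yJ j)) (g j (yJ j))) =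
      ∏ j, ∑ y, min (f j y) (g j y) := sum_prod_pi (fun j y => min (f j y) (g j y))
  have hfac : ∀ j, (1 - D j) ≤ ∑ y, min (f j y) (g j y) := by
    intro j
    have : ∑ y, min (f j y) (g j y) = 1 - (1 / 2) * ∑ y, |f j y - g j y| := by
      have : ∑ y, |f j y - g j y| = 2 - 2 * ∑ y, min (f j y) (g j y) := by
        rw [Finset.sum_congr rfl (fun y _ => habs (f j y) (g j y)),
          Finset.sum_sub_distrib, Finset.sum_add_distrib, ← Finset.mul_sum,
          hf1 j, hg1 j]
        ring
      rw [this]; ring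
    rw [this]
    have := hD j
    linarith
  have hprod : ∏ j, (1 - D j) ≤ ∏ j, ∑ y, min (f j y) (g j y) := by
    apply Finset.prod_le_prod
    · intro j _
      have := hD1 j; linarith
    · intro j _; exact hfac j
  rw [hminval] at hmin
  linarith [le_trans hprod hmin]

/-- The total-variation norm of a tensor product of column-stochastic matrices along a
bipartite graph (each `j ∈ J` having exactly one neighbor in `I`) is at most
`α` of the norms of the factors. -/
theorem matNorm_tensor_le {I J S : Type*} [Fintype I] [Fintype J] [DecidableEq J]
    [Fintype S] [Nonempty S]
    (E : Finset (I × J)) (hE : ∀ j : J, ∃! i : I, (i, j) ∈ E)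
    (A : I × J → Matrix S S ℝ)
    (hA0 : ∀ p ∈ E, ∀ y x, 0 ≤ A p y x) (hA1 : ∀ p ∈ E, ∀ x, ∑ y, A p y x = 1)
    (e : Fin E.card ≃ {p // p ∈ E}) :
    ∀ xI xI' : I → S,
      (1 / 2) * ∑ yJ : J → S,
          |(∏ p ∈ E, A p (yJ p.2) (xI p.1)) - ∏ p ∈ E, A p (yJ p.2) (xI' p.1)| ≤
        alpha E.card (fun k => matNorm (A (e k).1)) := by
  intro xI xI'
  classical
  set i₀ : J → I := fun j => (hE j).choose with hi₀
  have hmem : ∀ j, (i₀ j, j) ∈ E := fun j => (hE j).choose_spec.1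
  have huniq : ∀ j i, (i, j) ∈ E → i = i₀ j := fun j i h => (hE j).choose_spec.2 i h
  have hEimg : E = Finset.image (fun j => (i₀ j, j)) Finset.univ := by
    ext p
    simp only [Finset.mem_image, Finset.mem_univ, true_and]
    constructor
    · intro hp
      refine ⟨p.2, ?_⟩
      have := huniq p.2 p.1 hp
      rw [← this]
    · rintro ⟨j, rfl⟩
      exact hmem j
  have hinj : ∀ a ∈ (Finset.univ : Finset J), ∀ b ∈ Finset.univ,
      (fun j => (i₀ j, j)) a = (fun j => (i₀ j, j)) b → a = b := by
    intro a _ b _ hab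
    exact congrArg Prod.snd hab
  have hEprod : ∀ h : I × J → ℝ, ∏ p ∈ E, h p = ∏ j, h (i₀ j, j) := by
    intro h
    rw [hEimg, Finset.prod_image hinj]
  -- rewrite RHS
  have hRHS : alpha E.card (fun k => matNorm (A (e k).1)) =
      1 - ∏ j, (1 - matNorm (A (i₀ j, j))) := by
    rw [alpha_eq]
    congr 1
    have h1 : ∏ k : Fin E.card, (1 - matNorm (A (e k).1)) =
        ∏ p : {p // p ∈ E}, (1 - matNorm (A p.1)) := Equiv.prod_comp e (fun p => 1 - matNorm (A p.1))
    have h2 : ∏ p : {p // p ∈ E}, (1 - matNorm (A p.1)) =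
        ∏ p ∈ E, (1 - matNorm (A p)) := Finset.prod_coe_sort E (fun p => 1 - matNorm (A p))
    rw [h1, h2, hEprod]
  rw [hRHS]
  -- rewrite LHS products
  have hLf : ∀ yJ : J → S, ∏ p ∈ E, A p (yJ p.2) (xI p.1) =
      ∏ j, A (i₀ j, j) (yJ j) (xI (i₀ j)) := fun yJ => hEprod _
  have hLg : ∀ yJ : J → S, ∏ p ∈ E, A p (yJ p.2) (xI' p.1) =
      ∏ j, A (i₀ j, j) (yJ j) (xI' (i₀ j)) := fun yJ => hEprod _
  simp only [hLf, hLg]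
  -- apply the main lemma
  have hnorm1 : ∀ j, matNorm (A (i₀ j, j)) ≤ 1 := by
    intro j
    apply Finset.sup'_le
    rintro ⟨x, x'⟩ -
    have h1 : ∑ y, |A (i₀ j, j) y x - A (i₀ j, j) y x'| ≤
        ∑ y, (A (i₀ j, j) y x + A (i₀ j, j) y x') := by
      apply Finset.sum_le_sum
      intro y _
      have h0 := hA0 _ (hmem j) y x
      have h0' := hA0 _ (hmem j) y x'
      rw [abs_sub_le_iff]
      constructor <;> linarith
    rw [Finset.sum_add_distrib, hA1 _ (hmem j) x, hA1 _ (hmem j) x'] at h1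
    linarith
  have hnormle : ∀ j, (1 / 2) * ∑ y, |A (i₀ j, j) y (xI (i₀ j)) -
      A (i₀ j, j) y (xI' (i₀ j))| ≤ matNorm (A (i₀ j, j)) := by
    intro j
    exact Finset.le_sup' (f := fun jj' : S × S =>
      (1 / 2) * ∑ y, |A (i₀ j, j) y jj'.1 - A (i₀ j, j) y jj'.2|)
      (Finset.mem_univ (xI (i₀ j), xI' (i₀ j)))
  exact tv_prod_le (fun j y => A (i₀ j, j) y (xI (i₀ j)))
    (fun j y => A (i₀ j, j) y (xI' (i₀ j)))
    (fun j y => hA0 _ (hmem j) y _) (fun j y => hA0 _ (hmem j) y _)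
    (fun j => hA1 _ (hmem j) _) (fun j => hA1 _ (hmem j) _)
    (fun j => matNorm (A (i₀ j, j))) hnorm1 hnormle
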